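/- arXiv:1502.03364 — 6 statements merged into one kernel-verified Lean document; each statement's English description precedes it below -/
import Mathlib

section
/- Let Ω be a finite set (the path space), let P₀ be a probability mass function on Ω, let R : Ω → Ω be a bijection such that P₀(R x) = P₀(x) for all x ∈ Ω, let Q : Ω → ℝ^d, let E ∈ ℝ^d, and let U : ℝ^d → ℝ^d be an invertible linear map such that Q(R x) = U (Q x) for all x ∈ Ω. Define the tilted probability P(x) = exp(E · Q(x)) P₀(x) / N with N = Σ_{x∈Ω} exp(E · Q(x)) P₀(x), and the moment generating function Z(λ) = Σ_{x∈Ω} P(x) exp(λ · Q(x)). Then for every λ ∈ ℝ^d, Z(λ) = Z((U⁻¹)ᵗ(λ + E) − E), where (U⁻¹)ᵗ denotes the transpose (adjoint) of the inverse of U. -/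
open Matrix Finset

/-- **Spatial fluctuation theorem** (finite path space, finite time).
If the field-free path measure `P₀` is invariant under the bijection `R` of path space,
and the current `Q` transforms covariantly under `R` via the invertible linear map `U`
(given as an invertible matrix acting by `U.mulVec`), then the moment generating function
`Z` of the current under the tilted measure `P` satisfies
`Z λ = Z ((U⁻¹)ᵗ (λ + E) - E)`. -/
theorem spatial_fluctuation_theorem
    {d : ℕ} {Ω : Type*} [Fintype Ω]
    (P₀ : Ω → ℝ) (hP₀nonneg : ∀ x, 0 ≤ P₀ x) (hP₀sum : ∑ x, P₀ x = 1)
    (R : Ω ≃ Ω) (hRinv : ∀ x, P₀ (R x) = P₀ x)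
    (Q : Ω → (Fin d → ℝ)) (E : Fin d → ℝ)
    (U : Matrix (Fin d) (Fin d) ℝ) (hU : IsUnit U.det)
    (hQ : ∀ x, Q (R x) = U.mulVec (Q x))
    (N : ℝ) (hN : N = ∑ x, Real.exp (E ⬝ᵥ Q x) * P₀ x)
    (P : Ω → ℝ) (hP : ∀ x, P x = Real.exp (E ⬝ᵥ Q x) * P₀ x / N)
    (Z : (Fin d → ℝ) → ℝ) (hZ : ∀ l, Z l = ∑ x, P x * Real.exp (l ⬝ᵥ Q x)) :
    ∀ l : Fin d → ℝ, Z l = Z ((U⁻¹)ᵀ.mulVec (l + E) - E) := by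
  intro l
  set l' : Fin d → ℝ := (U⁻¹)ᵀ.mulVec (l + E) - E with hl'
  have hterm : ∀ (v : Fin d → ℝ) (x : Ω),
      P x * Real.exp (v ⬝ᵥ Q x) = Real.exp ((v + E) ⬝ᵥ Q x) * P₀ x / N := by
    intro v x
    rw [hP x, add_dotProduct, Real.exp_add]
    ring
  have hUQ : ∀ x, U⁻¹.mulVec (Q (R x)) = Q x := by
    intro x
    rw [hQ x, Matrix.mulVec_mulVec, Matrix.nonsing_inv_mul U hU, Matrix.one_mulVec]
  have hdot : ∀ x, (l' + E) ⬝ᵥ Q (R x) = (l + E) ⬝ᵥ Q x := by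
    intro x
    have : l' + E = (U⁻¹)ᵀ.mulVec (l + E) := by simp [hl']
    rw [this, ← hUQ x, Matrix.mulVec_transpose, ←
      Matrix.dotProduct_mulVec]
  rw [hZ l, hZ l']
  calc ∑ x, P x * Real.exp (l ⬝ᵥ Q x)
      = ∑ x, Real.exp ((l + E) ⬝ᵥ Q x) * P₀ x / N := by
        exact Finset.sum_congr rfl fun x _ => hterm l x
    _ = ∑ x, Real.exp ((l' + E) ⬝ᵥ Q (R x)) * P₀ (R x) / N := by
        refine Finset.sum_congr rfl fun x _ => ?_
        rw [hdot x, hRinv x]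
    _ = ∑ x, Real.exp ((l' + E) ⬝ᵥ Q x) * P₀ x / N := by
        exact Fintype.sum_equiv R _ _ fun x => rfl
    _ = ∑ x, P x * Real.exp (l' ⬝ᵥ Q x) := by
        exact Finset.sum_congr rfl fun x _ => (hterm l' x).symm
end

section
/- Let Ω be a finite set, P₀ a probability mass function on Ω, R : Ω → Ω a bijection with P₀(R x) = P₀(x) for all x, Q : Ω → ℝ^d with Q(R x) = −Q(x) for all x (i.e. the transformation is spatial inversion U = −Id), and E ∈ ℝ^d. Define P(x) = exp(E · Q(x)) P₀(x) / N with N = Σ_x exp(E · Q(x)) P₀(x), and Z(λ) = Σ_x P(x) exp(λ · Q(x)). Then for every λ ∈ ℝ^d, Z(λ) = Z(−λ − 2E). -/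
open Matrix Finset

/-- **Gallavotti–Cohen fluctuation relation** as the special case of the spatial
fluctuation theorem for spatial inversion `U = -Id`: if the field-free path measure
`P₀` is invariant under the bijection `R` and the current is odd under `R`, then the
moment generating function of the current under the tilted measure satisfies
`Z λ = Z (-λ - 2E)`. -/
theorem gallavotti_cohen_fluctuation_relation
    {d : ℕ} {Ω : Type*} [Fintype Ω]
    (P₀ : Ω → ℝ) (hP₀nonneg : ∀ x, 0 ≤ P₀ x) (hP₀sum : ∑ x, P₀ x = 1)
    (R : Ω ≃ Ω) (hRinv : ∀ x, P₀ (R x) = P₀ x)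
    (Q : Ω → (Fin d → ℝ)) (hQ : ∀ x, Q (R x) = -Q x)
    (E : Fin d → ℝ)
    (N : ℝ) (hN : N = ∑ x, Real.exp (E ⬝ᵥ Q x) * P₀ x)
    (P : Ω → ℝ) (hP : ∀ x, P x = Real.exp (E ⬝ᵥ Q x) * P₀ x / N)
    (Z : (Fin d → ℝ) → ℝ) (hZ : ∀ l, Z l = ∑ x, P x * Real.exp (l ⬝ᵥ Q x)) :
    ∀ l : Fin d → ℝ, Z l = Z (-l - (2 : ℝ) • E) := by
  intro l
  rw [hZ, hZ]
  rw [← Equiv.sum_comp R fun x => P x * Real.exp (l ⬝ᵥ Q x)]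
  refine Finset.sum_congr rfl fun x _ => ?_
  rw [hP, hP, hQ, hRinv]
  have h1 : E ⬝ᵥ -Q x = -(E ⬝ᵥ Q x) := by simp [dotProduct_neg]
  have h2 : l ⬝ᵥ -Q x = -(l ⬝ᵥ Q x) := by simp [dotProduct_neg]
  have h3 : (-l - (2:ℝ) • E) ⬝ᵥ Q x = -(l ⬝ᵥ Q x) - 2 * (E ⬝ᵥ Q x) := by
    simp [sub_dotProduct, neg_dotProduct, smul_dotProduct, smul_eq_mul]
  rw [h1, h2, h3]
  rw [div_mul_eq_mul_div, div_mul_eq_mul_div]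
  congr 1
  have key : Real.exp (-(E ⬝ᵥ Q x)) * Real.exp (-(l ⬝ᵥ Q x))
      = Real.exp (E ⬝ᵥ Q x) * Real.exp (-(l ⬝ᵥ Q x) - 2 * (E ⬝ᵥ Q x)) := by
    rw [← Real.exp_add, ← Real.exp_add]; ring_nf
  linear_combination P₀ x * key
end

section
/- Let d ≥ 1, let U : ℝ^d → ℝ^d be an invertible linear map, let E ∈ ℝ^d, and let μ : ℝ^d → ℝ satisfy μ(λ) = μ((U⁻¹)ᵗ(λ + E) − E) for all λ ∈ ℝ^d. Define the Legendre transform I(q) = sup_{λ ∈ ℝ^d} (λ · q − μ(λ)), and assume I(q) and I(U q) are finite for a given q ∈ ℝ^d. Then I(q) − I(U q) = (Uᵗ E − E) · q. -/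
open Matrix

/-- **Spatial fluctuation relation for rate functions.** If the scaled cumulant
generating function `μ` satisfies the symmetry `μ λ = μ ((U⁻¹)ᵗ(λ + E) - E)` for an
invertible matrix `U` and field `E`, and the Legendre transform values
`I q = sup_λ (λ·q - μ λ)` and `I (U q)` are finite (i.e. the suprema are attained as
real least upper bounds `Iq` and `IUq`), then `I q - I (U q) = (Uᵗ E - E) · q`. -/
theorem rate_function_spatial_fluctuation_relation
    {d : ℕ} (hd : 1 ≤ d)
    (U : Matrix (Fin d) (Fin d) ℝ) (hU : IsUnit U.det)
    (E : Fin d → ℝ) (μ : (Fin d → ℝ) → ℝ)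
    (hμ : ∀ l : Fin d → ℝ, μ l = μ ((U⁻¹)ᵀ.mulVec (l + E) - E))
    (q : Fin d → ℝ) (Iq IUq : ℝ)
    (hIq : IsLUB (Set.range fun l : Fin d → ℝ => l ⬝ᵥ q - μ l) Iq)
    (hIUq : IsLUB (Set.range fun l : Fin d → ℝ => l ⬝ᵥ U.mulVec q - μ l) IUq) :
    Iq - IUq = (Uᵀ.mulVec E - E) ⬝ᵥ q := by
  set c : ℝ := (Uᵀ.mulVec E - E) ⬝ᵥ q with hc
  have hdot : ∀ (A : Matrix (Fin d) (Fin d) ℝ) (x y : Fin d → ℝ),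
      Aᵀ.mulVec x ⬝ᵥ y = x ⬝ᵥ A.mulVec y := by
    intro A x y
    rw [Matrix.mulVec_transpose, ← Matrix.dotProduct_mulVec]
  have hinvU : U⁻¹ * U = 1 := Matrix.nonsing_inv_mul U hU
  have hUinv : U * U⁻¹ = 1 := Matrix.mul_nonsing_inv U hU
  set φ : (Fin d → ℝ) → (Fin d → ℝ) := fun l => (U⁻¹)ᵀ.mulVec (l + E) - E with hφ
  set ψ : (Fin d → ℝ) → (Fin d → ℝ) := fun m => Uᵀ.mulVec (m + E) - E with hψ
  have hφψ : ∀ m, φ (ψ m) = m := by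
    intro m
    simp only [hφ, hψ]
    rw [sub_add_cancel, Matrix.mulVec_mulVec, ← Matrix.transpose_mul, hUinv,
      Matrix.transpose_one, Matrix.one_mulVec, add_sub_cancel_right]
  -- key identity
  have key : ∀ l : Fin d → ℝ,
      l ⬝ᵥ q - μ l = (φ l ⬝ᵥ U.mulVec q - μ (φ l)) + c := by
    intro l
    have hμl : μ l = μ (φ l) := hμ l
    have h1 : φ l ⬝ᵥ U.mulVec q = (l + E) ⬝ᵥ q - Uᵀ.mulVec E ⬝ᵥ q := by
      simp only [hφ, sub_dotProduct]
      rw [hdot, Matrix.mulVec_mulVec, hinvU, Matrix.one_mulVec, ← hdot]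
    rw [hμl, h1, hc]
    simp only [add_dotProduct, sub_dotProduct]
    ring
  have hub1 : Iq ≤ IUq + c := by
    apply hIq.2
    rintro x ⟨l, rfl⟩
    show l ⬝ᵥ q - μ l ≤ IUq + c
    rw [key l]
    have : φ l ⬝ᵥ U.mulVec q - μ (φ l) ≤ IUq := hIUq.1 ⟨φ l, rfl⟩
    linarith
  have hub2 : IUq ≤ Iq - c := by
    apply hIUq.2
    rintro x ⟨m, rfl⟩
    show m ⬝ᵥ U.mulVec q - μ m ≤ Iq - c
    have h := key (ψ m)
    rw [hφψ m] at h
    have : ψ m ⬝ᵥ q - μ (ψ m) ≤ Iq := hIq.1 ⟨ψ m, rfl⟩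
    linarith
  linarith
end

section
/- Let (Ω, 𝓕, P₀) be a measure space with P₀ σ-finite, let R : Ω → Ω be a measurable bijection with measurable inverse such that the pushforward of P₀ under R equals P₀, let H : Ω → ℝ be measurable, and define dP = e^H dP₀. Then for every γ ∈ ℝ, ∫ exp(γ (H(R ω) − H(ω))) dP(ω) = ∫ exp((1 − γ)(H(R⁻¹ ω) − H(ω))) dP(ω), as an identity of lower Lebesgue integrals in [0, ∞]. -/
open MeasureTheory

/-- **Fluctuation symmetry for the log-density.** If the σ-finite reference measure `P₀`
is invariant under the measurable bijection `R` and `P = e^H · P₀`, then for every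
`γ ∈ ℝ`,
`∫ e^{γ(H∘R - H)} dP = ∫ e^{(1-γ)(H∘R⁻¹ - H)} dP`
(as lower Lebesgue integrals in `[0,∞]`). -/
theorem fluctuation_symmetry_log_density
    {Ω : Type*} [MeasurableSpace Ω]
    (P₀ : Measure Ω) [SigmaFinite P₀]
    (R : Ω ≃ᵐ Ω) (hR : Measure.map R P₀ = P₀)
    (H : Ω → ℝ) (hH : Measurable H)
    (P : Measure Ω)
    (hP : P = P₀.withDensity (fun ω => ENNReal.ofReal (Real.exp (H ω))))
    (γ : ℝ) :
    ∫⁻ ω, ENNReal.ofReal (Real.exp (γ * (H (R ω) - H ω))) ∂P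
      = ∫⁻ ω, ENNReal.ofReal (Real.exp ((1 - γ) * (H (R.symm ω) - H ω))) ∂P := by
  subst hP
  have hd : Measurable fun ω => ENNReal.ofReal (Real.exp (H ω)) :=
    hH.exp.ennreal_ofReal
  have h1 : Measurable fun ω => ENNReal.ofReal (Real.exp (γ * (H (R ω) - H ω))) :=
    ((((hH.comp R.measurable).sub hH).const_mul γ).exp).ennreal_ofReal
  have h2 : Measurable fun ω =>
      ENNReal.ofReal (Real.exp ((1 - γ) * (H (R.symm ω) - H ω))) :=
    ((((hH.comp R.symm.measurable).sub hH).const_mul (1 - γ)).exp).ennreal_ofReal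
  rw [lintegral_withDensity_eq_lintegral_mul _ hd h1,
    lintegral_withDensity_eq_lintegral_mul _ hd h2]
  set g : Ω → ENNReal := fun ω =>
    ENNReal.ofReal (Real.exp ((1 - γ) * H (R.symm ω) + γ * H ω)) with hg_def
  have hg : Measurable g :=
    (((hH.comp R.symm.measurable).const_mul _).add (hH.const_mul _)).exp.ennreal_ofReal
  have hL : ∀ ω,
      ((fun ω => ENNReal.ofReal (Real.exp (H ω))) * fun ω =>
        ENNReal.ofReal (Real.exp (γ * (H (R ω) - H ω)))) ω = g (R ω) := by
    intro ω
    simp only [Pi.mul_apply, hg_def, R.symm_apply_apply,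
      ← ENNReal.ofReal_mul (Real.exp_nonneg _), ← Real.exp_add]
    ring_nf
  have hRhs : ∀ ω,
      ((fun ω => ENNReal.ofReal (Real.exp (H ω))) * fun ω =>
        ENNReal.ofReal (Real.exp ((1 - γ) * (H (R.symm ω) - H ω)))) ω = g ω := by
    intro ω
    simp only [Pi.mul_apply, hg_def,
      ← ENNReal.ofReal_mul (Real.exp_nonneg _), ← Real.exp_add]
    ring_nf
  calc ∫⁻ ω, ((fun ω => ENNReal.ofReal (Real.exp (H ω))) * fun ω =>
        ENNReal.ofReal (Real.exp (γ * (H (R ω) - H ω)))) ω ∂P₀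
      = ∫⁻ ω, g (R ω) ∂P₀ := by simp only [hL]
    _ = ∫⁻ ω, g ω ∂(Measure.map R P₀) := (lintegral_map hg R.measurable).symm
    _ = ∫⁻ ω, g ω ∂P₀ := by rw [hR]
    _ = _ := by simp only [← hRhs]
end

section
/- Let (Ω, 𝓕, P₀) be a measure space with P₀ σ-finite, let R : Ω → Ω be a measurable bijection satisfying R ∘ R = id and whose pushforward leaves P₀ invariant, let H : Ω → ℝ be measurable, define dP = e^H dP₀, and set W = H ∘ R − H. Then for every γ ∈ ℝ, ∫ exp(γ W) dP = ∫ exp((1 − γ) W) dP, as an identity of lower Lebesgue integrals in [0, ∞]. -/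
open MeasureTheory

/-- **Standard fluctuation theorem for an involution.** If the σ-finite reference
measure `P₀` is invariant under the measurable involution `R` (`R ∘ R = id`),
`P = e^H · P₀` and `W = H ∘ R - H`, then for every `γ ∈ ℝ`,
`∫ e^{γ W} dP = ∫ e^{(1-γ) W} dP` (as lower Lebesgue integrals in `[0,1]`). -/
theorem fluctuation_theorem_involution
    {Ω : Type*} [MeasurableSpace Ω]
    (P₀ : Measure Ω) [SigmaFinite P₀]
    (R : Ω → Ω) (hRmeas : Measurable R) (hRR : R ∘ R = id)
    (hR : Measure.map R P₀ = P₀)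
    (H : Ω → ℝ) (hH : Measurable H)
    (P : Measure Ω)
    (hP : P = P₀.withDensity (fun ω => ENNReal.ofReal (Real.exp (H ω))))
    (W : Ω → ℝ) (hW : ∀ ω, W ω = H (R ω) - H ω)
    (γ : ℝ) :
    ∫⁻ ω, ENNReal.ofReal (Real.exp (γ * W ω)) ∂P
      = ∫⁻ ω, ENNReal.ofReal (Real.exp ((1 - γ) * W ω)) ∂P := by
  have hRRω : ∀ ω, R (R ω) = ω := fun ω => congrFun hRR ω
  subst hP
  have hHmul : Measurable fun ω => ENNReal.ofReal (Real.exp (H ω)) :=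
    (hH.exp.ennreal_ofReal)
  have hWmeas : Measurable W := by
    have : W = fun ω => H (R ω) - H ω := funext hW
    rw [this]; exact (hH.comp hRmeas).sub hH
  have h1 : Measurable fun ω => ENNReal.ofReal (Real.exp (γ * W ω)) :=
    ((hWmeas.const_mul γ).exp.ennreal_ofReal)
  have h2 : Measurable fun ω => ENNReal.ofReal (Real.exp ((1 - γ) * W ω)) :=
    ((hWmeas.const_mul (1 - γ)).exp.ennreal_ofReal)
  rw [lintegral_withDensity_eq_lintegral_mul _ hHmul h1,
      lintegral_withDensity_eq_lintegral_mul _ hHmul h2]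
  have key : ∀ ω, (fun ω => ENNReal.ofReal (Real.exp (H ω)) *
      ENNReal.ofReal (Real.exp (γ * W ω))) ω
      = ENNReal.ofReal (Real.exp (γ * H (R ω) + (1 - γ) * H ω)) := by
    intro ω
    simp only []
    rw [← ENNReal.ofReal_mul (Real.exp_nonneg _), ← Real.exp_add, hW]
    ring_nf
  have key2 : ∀ ω, (fun ω => ENNReal.ofReal (Real.exp (H ω)) *
      ENNReal.ofReal (Real.exp ((1 - γ) * W ω))) ω
      = ENNReal.ofReal (Real.exp ((1 - γ) * H (R ω) + γ * H ω)) := by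
    intro ω
    simp only []
    rw [← ENNReal.ofReal_mul (Real.exp_nonneg _), ← Real.exp_add, hW]
    ring_nf
  simp only [Pi.mul_apply] at *
  calc ∫⁻ ω, ENNReal.ofReal (Real.exp (H ω)) * ENNReal.ofReal (Real.exp (γ * W ω)) ∂P₀
      = ∫⁻ ω, ENNReal.ofReal (Real.exp (γ * H (R ω) + (1 - γ) * H ω)) ∂P₀ := by
        exact lintegral_congr key
    _ = ∫⁻ ω, ENNReal.ofReal (Real.exp (γ * H (R (R ω)) + (1 - γ) * H (R ω))) ∂P₀ := by
        conv_lhs => rw [← hR]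
        exact lintegral_map (by fun_prop) hRmeas
    _ = ∫⁻ ω, ENNReal.ofReal (Real.exp ((1 - γ) * H (R ω) + γ * H ω)) ∂P₀ := by
        refine lintegral_congr fun ω => ?_
        rw [hRRω ω]; ring_nf
    _ = ∫⁻ ω, ENNReal.ofReal (Real.exp (H ω)) * ENNReal.ofReal (Real.exp ((1 - γ) * W ω)) ∂P₀ :=
        (lintegral_congr key2).symm
end

section
/- Let d ≥ 1, let A be a d×d real matrix, let U be an invertible d×d real matrix with U A Uᵗ = A, let ρ ∈ ℝ and E ∈ ℝ^d. Define μ(λ) = (ρ/2) [ (λ + E) · A (λ + E) − E · A E ] for λ ∈ ℝ^d. Then for every λ ∈ ℝ^d, μ(λ) = μ( (U⁻¹)ᵗ (λ + E) − E ). -/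
open Matrix

/-- **Continuous spatial fluctuation relation for anisotropic Brownian motion.**
If `U` is invertible and preserves the diffusion matrix `A` (`U A Uᵗ = A`), then the
cumulant generating function `μ(λ) = (ρ/2)[(λ+E)·A(λ+E) - E·A E]` satisfies
`μ(λ) = μ((U⁻¹)ᵗ(λ+E) - E)` for all `λ`. -/
theorem brownian_spatial_fluctuation_relation
    {d : ℕ} (hd : 1 ≤ d)
    (A U : Matrix (Fin d) (Fin d) ℝ) (hU : IsUnit U.det)
    (hUA : U * A * Uᵀ = A)
    (ρ : ℝ) (E : Fin d → ℝ)
    (μ : (Fin d → ℝ) → ℝ)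
    (hμ : ∀ l : Fin d → ℝ,
      μ l = ρ / 2 * ((l + E) ⬝ᵥ A.mulVec (l + E) - E ⬝ᵥ A.mulVec E)) :
    ∀ l : Fin d → ℝ, μ l = μ ((U⁻¹)ᵀ.mulVec (l + E) - E) := by
  intro l
  rw [hμ, hμ]
  have hA : A = U⁻¹ * A * (U⁻¹)ᵀ := by
    have h := hUA
    calc A = U⁻¹ * (U * A * Uᵀ) * (U⁻¹)ᵀ := by
            rw [Matrix.transpose_nonsing_inv]
            rw [show U⁻¹ * (U * A * Uᵀ) * Uᵀ⁻¹ = (U⁻¹ * U) * A * (Uᵀ * Uᵀ⁻¹) by noncomm_ring]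
            rw [Matrix.nonsing_inv_mul _ hU, Matrix.mul_nonsing_inv _ (by simpa using hU)]
            simp
      _ = U⁻¹ * A * (U⁻¹)ᵀ := by rw [hUA]
  congr 2
  have key : ((U⁻¹)ᵀ.mulVec (l + E) - E + E) ⬝ᵥ A.mulVec ((U⁻¹)ᵀ.mulVec (l + E) - E + E)
      = (l + E) ⬝ᵥ A.mulVec (l + E) := by
    have hv : (U⁻¹)ᵀ.mulVec (l + E) - E + E = (U⁻¹)ᵀ.mulVec (l + E) := by
      simp
    rw [hv]
    conv_rhs => rw [hA]
    rw [Matrix.mulVec_transpose, Matrix.dotProduct_mulVec, Matrix.vecMul_vecMul,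
      ← Matrix.mulVec_mulVec, ← Matrix.dotProduct_mulVec, Matrix.mulVec_transpose]
  rw [key]
end
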